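/- Let α > 0, ρ > 0, η, κ, β ∈ ℝ, p ≥ 1, and 0 ≤ a < x. Let f, g be two positive functions on [a,x] such that I f^p(x) < ∞ and I g^p(x) < ∞, where I denotes the generalized fractional integral ρI^{α,β}_{a+,η,κ}. Suppose there exist real constants 0 < c < m ≤ M such that m ≤ f(t)/g(t) ≤ M for all t ∈ [a,x]. Then ((M+1)/(M−c)) · (I((f−cg)^p)(x))^(1/p) ≤ (I f^p(x))^(1/p) + (I g^p(x))^(1/p) ≤ ((m+1)/(m−c)) · (I((f−cg)^p)(x))^(1/p), where (f−cg)^p denotes the function t ↦ (f(t) − c·g(t))^p. -/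
import Mathlib


open MeasureTheory

/-- The left-sided generalized (Katugampola) fractional integral
`ρI^{α,β}_{a+,η,κ} f (x)`. -/
noncomputable def katI (α ρ η κ β a x : ℝ) (f : ℝ → ℝ) : ℝ :=
  (ρ ^ (1 - β) * x ^ κ / Real.Gamma α) *
    ∫ t in a..x, t ^ (ρ * (η + 1) - 1) * (x ^ ρ - t ^ ρ) ^ (α - 1) * f t

/-- Finiteness of the generalized fractional integral, expressed as integrability of the
kernel-weighted integrand. -/
def katIntegrable (α ρ η κ β a x : ℝ) (f : ℝ → ℝ) : Prop :=
  IntervalIntegrable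
    (fun t => t ^ (ρ * (η + 1) - 1) * (x ^ ρ - t ^ ρ) ^ (α - 1) * f t)
    volume a x

private lemma katI_le_aux (α ρ η κ β a x k : ℝ) (u w : ℝ → ℝ)
    (hC : 0 ≤ ρ ^ (1 - β) * x ^ κ / Real.Gamma α) (hax : a ≤ x)
    (hu : katIntegrable α ρ η κ β a x u) (hw : katIntegrable α ρ η κ β a x w)
    (h : ∀ t ∈ Set.Icc a x,
      t ^ (ρ * (η + 1) - 1) * (x ^ ρ - t ^ ρ) ^ (α - 1) * u t ≤
      k * (t ^ (ρ * (η + 1) - 1) * (x ^ ρ - t ^ ρ) ^ (α - 1) * w t)) :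
    katI α ρ η κ β a x u ≤ k * katI α ρ η κ β a x w := by
  unfold katI
  rw [mul_left_comm]
  refine mul_le_mul_of_nonneg_left ?_ hC
  rw [← intervalIntegral.integral_const_mul]
  exact intervalIntegral.integral_mono_on hax hu (hw.const_mul k) h

private lemma katI_ge_aux (α ρ η κ β a x k : ℝ) (u w : ℝ → ℝ)
    (hC : 0 ≤ ρ ^ (1 - β) * x ^ κ / Real.Gamma α) (hax : a ≤ x)
    (hu : katIntegrable α ρ η κ β a x u) (hw : katIntegrable α ρ η κ β a x w)
    (h : ∀ t ∈ Set.Icc a x,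
      k * (t ^ (ρ * (η + 1) - 1) * (x ^ ρ - t ^ ρ) ^ (α - 1) * w t) ≤
      t ^ (ρ * (η + 1) - 1) * (x ^ ρ - t ^ ρ) ^ (α - 1) * u t) :
    k * katI α ρ η κ β a x w ≤ katI α ρ η κ β a x u := by
  unfold katI
  rw [mul_left_comm]
  refine mul_le_mul_of_nonneg_left ?_ hC
  rw [← intervalIntegral.integral_const_mul]
  exact intervalIntegral.integral_mono_on hax (hw.const_mul k) hu h

/-- Two-sided bound via the generalized fractional integral. -/
theorem two_sided_bound_katugampola
    (α ρ η κ β p m M c a x : ℝ) (hα : 0 < α) (hρ : 0 < ρ) (hp : 1 ≤ p)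
    (ha : 0 ≤ a) (hax : a < x)
    (f g : ℝ → ℝ)
    (hf_pos : ∀ t ∈ Set.Icc a x, 0 < f t)
    (hg_pos : ∀ t ∈ Set.Icc a x, 0 < g t)
    (hf_int : katIntegrable α ρ η κ β a x (fun t => f t ^ p))
    (hg_int : katIntegrable α ρ η κ β a x (fun t => g t ^ p))
    (hc : 0 < c) (hcm : c < m) (hmM : m ≤ M)
    (hbound : ∀ t ∈ Set.Icc a x, m ≤ f t / g t ∧ f t / g t ≤ M) :
    ((M + 1) / (M - c)) *
        (katI α ρ η κ β a x (fun t => (f t - c * g t) ^ p)) ^ (1 / p) ≤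
      (katI α ρ η κ β a x (fun t => f t ^ p)) ^ (1 / p) +
        (katI α ρ η κ β a x (fun t => g t ^ p)) ^ (1 / p) ∧
    (katI α ρ η κ β a x (fun t => f t ^ p)) ^ (1 / p) +
        (katI α ρ η κ β a x (fun t => g t ^ p)) ^ (1 / p) ≤
      ((m + 1) / (m - c)) *
        (katI α ρ η κ β a x (fun t => (f t - c * g t) ^ p)) ^ (1 / p) := by
  have hx : 0 < x := lt_of_le_of_lt ha hax
  have hp0 : 0 < p := lt_of_lt_of_le one_pos hp
  have hmc : 0 < m - c := sub_pos.2 hcm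
  have hMc : 0 < M - c := sub_pos.2 (lt_of_lt_of_le hcm hmM)
  have hm0 : 0 < m := lt_trans hc hcm
  have hM0 : 0 < M := lt_of_lt_of_le hm0 hmM
  set K : ℝ → ℝ := fun t => t ^ (ρ * (η + 1) - 1) * (x ^ ρ - t ^ ρ) ^ (α - 1) with hKdef
  have hC : 0 < ρ ^ (1 - β) * x ^ κ / Real.Gamma α :=
    div_pos (mul_pos (Real.rpow_pos_of_pos hρ _) (Real.rpow_pos_of_pos hx _))
      (Real.Gamma_pos_of_pos hα)
  have hKnn : ∀ t ∈ Set.Icc a x, 0 ≤ K t := by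
    intro t ht
    exact mul_nonneg (Real.rpow_nonneg (le_trans ha ht.1) _)
      (Real.rpow_nonneg
        (sub_nonneg.2 (Real.rpow_le_rpow (le_trans ha ht.1) ht.2 hρ.le)) _)
  -- pointwise facts
  have hfg : ∀ t ∈ Set.Icc a x, m * g t ≤ f t ∧ f t ≤ M * g t := by
    intro t ht
    have hg := hg_pos t ht
    obtain ⟨h1, h2⟩ := hbound t ht
    exact ⟨(le_div_iff₀ hg).1 h1, (div_le_iff₀ hg).1 h2⟩
  set q : ℝ → ℝ := fun t => f t - c * g t with hqdef
  have hq_pos : ∀ t ∈ Set.Icc a x, 0 < q t := by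
    intro t ht
    have := (hfg t ht).1
    have hg := hg_pos t ht
    simp only [hqdef]
    nlinarith
  -- kernel-weighted integrability of q ^ p
  have hq_int : katIntegrable α ρ η κ β a x (fun t => q t ^ p) := by
    have hKm : Measurable K := by
      exact (measurable_id.pow measurable_const).mul
        ((measurable_const.sub (measurable_id.pow measurable_const)).pow measurable_const)
    rw [katIntegrable, intervalIntegrable_iff_integrableOn_Ioc_of_le (le_of_lt hax)]
    have hfI : IntegrableOn (fun t => K t * f t ^ p) (Set.Ioc a x) volume := by
      rw [katIntegrable, intervalIntegrable_iff_integrableOn_Ioc_of_le (le_of_lt hax)] at hf_int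
      exact hf_int
    have hgI : IntegrableOn (fun t => K t * g t ^ p) (Set.Ioc a x) volume := by
      rw [katIntegrable, intervalIntegrable_iff_integrableOn_Ioc_of_le (le_of_lt hax)] at hg_int
      exact hg_int
    -- a.e. every point of Ioc is in Ioo
    have hae : ∀ᵐ t ∂(volume.restrict (Set.Ioc a x)), t ∈ Set.Ioo a x := by
      have h1 : ∀ᵐ t ∂(volume.restrict (Set.Ioc a x)), t ∈ Set.Ioc a x :=
        ae_restrict_mem measurableSet_Ioc
      have h2 : ∀ᵐ t ∂(volume : Measure ℝ), t ≠ x := by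
        have : (volume : Measure ℝ) {x} = 0 := measure_singleton x
        exact (ae_iff).2 (by simpa using this)
      have h2' : ∀ᵐ t ∂(volume.restrict (Set.Ioc a x)), t ≠ x := ae_restrict_of_ae h2
      filter_upwards [h1, h2'] with t ht hne
      exact ⟨ht.1, lt_of_le_of_ne ht.2 hne⟩
    have hKpos : ∀ t ∈ Set.Ioo a x, 0 < K t := by
      intro t ht
      have ht0 : 0 < t := lt_of_le_of_lt ha ht.1
      refine mul_pos (Real.rpow_pos_of_pos ht0 _) (Real.rpow_pos_of_pos ?_ _)
      exact sub_pos.2 (Real.rpow_lt_rpow ht0.le ht.2 hρ)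
    -- recover a.e.-measurability of f and g on the interval
    have recover : ∀ u : ℝ → ℝ, (∀ t ∈ Set.Icc a x, 0 < u t) →
        IntegrableOn (fun t => K t * u t ^ p) (Set.Ioc a x) volume →
        AEMeasurable u (volume.restrict (Set.Ioc a x)) := by
      intro u hu hI
      have h1 : AEMeasurable (fun t => K t * u t ^ p) (volume.restrict (Set.Ioc a x)) :=
        hI.aemeasurable
      have h2 : AEMeasurable (fun t => (K t * u t ^ p) / K t)
          (volume.restrict (Set.Ioc a x)) := h1.div hKm.aemeasurable
      have h3 : AEMeasurable (fun t => u t ^ p) (volume.restrict (Set.Ioc a x)) := by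
        refine h2.congr ?_
        filter_upwards [hae] with t ht
        have : K t ≠ 0 := (hKpos t ht).ne'
        field_simp
      have h4 : AEMeasurable (fun t => (u t ^ p) ^ (1/p))
          (volume.restrict (Set.Ioc a x)) := h3.pow aemeasurable_const
      refine h4.congr ?_
      have h5 : ∀ᵐ t ∂(volume.restrict (Set.Ioc a x)), t ∈ Set.Ioc a x :=
        ae_restrict_mem measurableSet_Ioc
      filter_upwards [h5] with t ht
      have hu0 : 0 ≤ u t := (hu t ⟨le_of_lt ht.1, ht.2⟩).le
      rw [one_div, Real.rpow_rpow_inv hu0 hp0.ne']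
    have hf_am := recover f hf_pos hfI
    have hg_am := recover g hg_pos hgI
    have hq_am : AEMeasurable (fun t => K t * q t ^ p)
        (volume.restrict (Set.Ioc a x)) :=
      hKm.aemeasurable.mul ((hf_am.sub (hg_am.const_mul c)).pow aemeasurable_const)
    -- domination by (M - c)^p * (K * g^p)
    refine Integrable.mono (hgI.const_mul ((M - c) ^ p)) hq_am.aestronglyMeasurable ?_
    have h5 : ∀ᵐ t ∂(volume.restrict (Set.Ioc a x)), t ∈ Set.Ioc a x :=
      ae_restrict_mem measurableSet_Ioc
    filter_upwards [h5] with t ht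
    have htI : t ∈ Set.Icc a x := ⟨le_of_lt ht.1, ht.2⟩
    have hKt := hKnn t htI
    have hgt := hg_pos t htI
    have hqb : q t ≤ (M - c) * g t := by
      have := (hfg t htI).2
      simp only [hqdef]; nlinarith
    have hq0 : 0 ≤ q t := (hq_pos t htI).le
    have hpow : q t ^ p ≤ (M - c) ^ p * g t ^ p := by
      calc q t ^ p ≤ ((M - c) * g t) ^ p := Real.rpow_le_rpow hq0 hqb hp0.le
        _ = (M - c) ^ p * g t ^ p := Real.mul_rpow hMc.le hgt.le
    rw [Real.norm_of_nonneg (mul_nonneg hKt (Real.rpow_nonneg hq0 _)),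
      Real.norm_of_nonneg]
    · calc K t * q t ^ p ≤ K t * ((M - c) ^ p * g t ^ p) :=
          mul_le_mul_of_nonneg_left hpow hKt
        _ = (M - c) ^ p * (K t * g t ^ p) := by ring
    · exact mul_nonneg (Real.rpow_nonneg hMc.le _)
        (mul_nonneg hKt (Real.rpow_nonneg hgt.le _))
  -- nonnegativity of the three integrals
  have katI_nn : ∀ u : ℝ → ℝ, (∀ t ∈ Set.Icc a x, 0 ≤ u t) →
      0 ≤ katI α ρ η κ β a x u := by
    intro u hu
    refine mul_nonneg hC.le (intervalIntegral.integral_nonneg (le_of_lt hax) ?_)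
    intro t ht
    exact mul_nonneg (hKnn t ht) (hu t ht)
  have hIq : 0 ≤ katI α ρ η κ β a x (fun t => q t ^ p) :=
    katI_nn _ (fun t ht => Real.rpow_nonneg (hq_pos t ht).le _)
  have hIf : 0 ≤ katI α ρ η κ β a x (fun t => f t ^ p) :=
    katI_nn _ (fun t ht => Real.rpow_nonneg (hf_pos t ht).le _)
  have hIg : 0 ≤ katI α ρ η κ β a x (fun t => g t ^ p) :=
    katI_nn _ (fun t ht => Real.rpow_nonneg (hg_pos t ht).le _)
  -- rpow extraction helper
  have rpow_pull : ∀ k I : ℝ, 0 ≤ k → 0 ≤ I → (k ^ p * I) ^ (1/p) = k * I ^ (1/p) := by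
    intro k I hk hI
    rw [Real.mul_rpow (Real.rpow_nonneg hk _) hI, ← Real.rpow_mul hk,
      mul_one_div_cancel hp0.ne', Real.rpow_one]
  -- pointwise comparison helper producing katI inequalities
  have key_le : ∀ (k : ℝ) (u : ℝ → ℝ), 0 ≤ k →
      (∀ t ∈ Set.Icc a x, 0 ≤ u t) →
      (∀ t ∈ Set.Icc a x, u t ≤ k * q t) →
      katIntegrable α ρ η κ β a x (fun t => u t ^ p) →
      katI α ρ η κ β a x (fun t => u t ^ p) ≤
        k ^ p * katI α ρ η κ β a x (fun t => q t ^ p) := by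
    intro k u hk hu0 hule hui
    refine katI_le_aux α ρ η κ β a x (k ^ p) _ _ hC.le (le_of_lt hax) hui hq_int ?_
    intro t ht
    have hKt := hKnn t ht
    have : u t ^ p ≤ k ^ p * q t ^ p := by
      calc u t ^ p ≤ (k * q t) ^ p := Real.rpow_le_rpow (hu0 t ht) (hule t ht) hp0.le
        _ = k ^ p * q t ^ p := Real.mul_rpow hk (hq_pos t ht).le
    calc K t * u t ^ p ≤ K t * (k ^ p * q t ^ p) := mul_le_mul_of_nonneg_left this hKt
      _ = k ^ p * (K t * q t ^ p) := by ring
  have key_ge : ∀ (k : ℝ) (u : ℝ → ℝ), 0 ≤ k →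
      (∀ t ∈ Set.Icc a x, k * q t ≤ u t) →
      katIntegrable α ρ η κ β a x (fun t => u t ^ p) →
      k ^ p * katI α ρ η κ β a x (fun t => q t ^ p) ≤
        katI α ρ η κ β a x (fun t => u t ^ p) := by
    intro k u hk hule hui
    refine katI_ge_aux α ρ η κ β a x (k ^ p) _ _ hC.le (le_of_lt hax) hui hq_int ?_
    intro t ht
    have hKt := hKnn t ht
    have hq0 := (hq_pos t ht).le
    have : k ^ p * q t ^ p ≤ u t ^ p := by
      calc k ^ p * q t ^ p = (k * q t) ^ p := (Real.mul_rpow hk hq0).symm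
        _ ≤ u t ^ p := Real.rpow_le_rpow (mul_nonneg hk hq0) (hule t ht) hp0.le
    calc k ^ p * (K t * q t ^ p) = K t * (k ^ p * q t ^ p) := by ring
      _ ≤ K t * u t ^ p := mul_le_mul_of_nonneg_left this hKt
  -- the four pointwise scalar bounds
  have bf_le : ∀ t ∈ Set.Icc a x, f t ≤ (m / (m - c)) * q t := by
    intro t ht
    have h1 := (hfg t ht).1
    have hg := hg_pos t ht
    rw [div_mul_eq_mul_div, le_div_iff₀ hmc]
    simp only [hqdef]; nlinarith
  have bg_le : ∀ t ∈ Set.Icc a x, g t ≤ (1 / (m - c)) * q t := by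
    intro t ht
    have h1 := (hfg t ht).1
    have hg := hg_pos t ht
    rw [div_mul_eq_mul_div, le_div_iff₀ hmc]
    simp only [hqdef]; nlinarith
  have bf_ge : ∀ t ∈ Set.Icc a x, (M / (M - c)) * q t ≤ f t := by
    intro t ht
    have h2 := (hfg t ht).2
    have hg := hg_pos t ht
    rw [div_mul_eq_mul_div, div_le_iff₀ hMc]
    simp only [hqdef]; nlinarith
  have bg_ge : ∀ t ∈ Set.Icc a x, (1 / (M - c)) * q t ≤ g t := by
    intro t ht
    have h2 := (hfg t ht).2
    have hg := hg_pos t ht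
    rw [div_mul_eq_mul_div, div_le_iff₀ hMc]
    simp only [hqdef]; nlinarith
  -- assemble
  set Iq := katI α ρ η κ β a x (fun t => q t ^ p) with hIqdef
  have h1 : katI α ρ η κ β a x (fun t => f t ^ p) ≤ (m / (m - c)) ^ p * Iq :=
    key_le _ f (div_nonneg hm0.le hmc.le) (fun t ht => (hf_pos t ht).le) bf_le hf_int
  have h2 : katI α ρ η κ β a x (fun t => g t ^ p) ≤ (1 / (m - c)) ^ p * Iq :=
    key_le _ g (div_nonneg zero_le_one hmc.le) (fun t ht => (hg_pos t ht).le) bg_le hg_int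
  have h3 : (M / (M - c)) ^ p * Iq ≤ katI α ρ η κ β a x (fun t => f t ^ p) :=
    key_ge _ f (div_nonneg hM0.le hMc.le) bf_ge hf_int
  have h4 : (1 / (M - c)) ^ p * Iq ≤ katI α ρ η κ β a x (fun t => g t ^ p) :=
    key_ge _ g (div_nonneg zero_le_one hMc.le) bg_ge hg_int
  have hrf : (katI α ρ η κ β a x (fun t => f t ^ p)) ^ (1/p) ≤
      (m / (m - c)) * Iq ^ (1/p) := by
    rw [← rpow_pull _ _ (div_nonneg hm0.le hmc.le) hIq]
    exact Real.rpow_le_rpow hIf h1 (by positivity)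
  have hrg : (katI α ρ η κ β a x (fun t => g t ^ p)) ^ (1/p) ≤
      (1 / (m - c)) * Iq ^ (1/p) := by
    rw [← rpow_pull _ _ (div_nonneg zero_le_one hmc.le) hIq]
    exact Real.rpow_le_rpow hIg h2 (by positivity)
  have hrf' : (M / (M - c)) * Iq ^ (1/p) ≤
      (katI α ρ η κ β a x (fun t => f t ^ p)) ^ (1/p) := by
    rw [← rpow_pull _ _ (div_nonneg hM0.le hMc.le) hIq]
    exact Real.rpow_le_rpow (by positivity) h3 (by positivity)
  have hrg' : (1 / (M - c)) * Iq ^ (1/p) ≤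
      (katI α ρ η κ β a x (fun t => g t ^ p)) ^ (1/p) := by
    rw [← rpow_pull _ _ (div_nonneg zero_le_one hMc.le) hIq]
    exact Real.rpow_le_rpow (by positivity) h4 (by positivity)
  constructor
  · have : ((M + 1) / (M - c)) * Iq ^ (1/p) =
        (M / (M - c)) * Iq ^ (1/p) + (1 / (M - c)) * Iq ^ (1/p) := by
      field_simp
    rw [this]
    exact add_le_add hrf' hrg'
  · have : ((m + 1) / (m - c)) * Iq ^ (1/p) =
        (m / (m - c)) * Iq ^ (1/p) + (1 / (m - c)) * Iq ^ (1/p) := by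
      field_simp
    rw [this]
    exact add_le_add hrf hrg
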